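/- For the generalized Sierpiński graphs of the claw K_{1,3}: χρ(S^1_{K_{1,3}}) = 2 and χρ(S^n_{K_{1,3}}) = 3 for every n ≥ 2. -/

import Mathlib

/-- The generalized Sierpiński graph `S^n_G` of a base graph `G` on the vertex set
`[k]_0 = {0, …, k−1}`: the vertices are the words of length `n` over `[k]_0`, and two
distinct words `u, v` are adjacent iff there is an index `i` with `u j = v j` for `j < i`,
`u i` adjacent to `v i` in `G`, and `u j = v i`, `v j = u i` for all `j > i`. -/
def genSierpinski {k : ℕ} (G : SimpleGraph (Fin k)) (n : ℕ) :
    SimpleGraph (Fin n → Fin k) where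
  Adj u v := ∃ i : Fin n,
    (∀ j, j < i → u j = v j) ∧ G.Adj (u i) (v i) ∧ ∀ j, i < j → u j = v i ∧ v j = u i
  symm := by
    refine ⟨?_⟩
    rintro u v ⟨i, h1, h2, h3⟩
    exact ⟨i, fun j hj => (h1 j hj).symm, h2.symm, fun j hj => ⟨(h3 j hj).2, (h3 j hj).1⟩⟩
  loopless := by
    refine ⟨?_⟩
    rintro u ⟨i, -, h2, -⟩
    exact G.irrefl h2

/-- The Sierpiński graph `S^n_k`, i.e. the generalized Sierpiński graph of the complete
graph `K_k` on `[k]_0` (in which two vertices are adjacent iff they are distinct). -/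
def sierpinski (k n : ℕ) : SimpleGraph (Fin n → Fin k) :=
  genSierpinski (⊤ : SimpleGraph (Fin k)) n

/-- `c` is a `t`-packing coloring of `G`: every vertex gets a color in `{1, …, t}`, and any
two distinct vertices with the same color `i` are at distance greater than `i`
(equivalently, every walk between them has length greater than `i`). -/
def IsPackingColoring {V : Type*} (G : SimpleGraph V) (t : ℕ) (c : V → ℕ) : Prop :=
  (∀ v, 1 ≤ c v ∧ c v ≤ t) ∧
    ∀ u v, u ≠ v → c u = c v → ∀ p : G.Walk u v, c u < p.length

/-- The packing chromatic number `χρ(G)`: the least `t` such that `G` admits a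
`t`-packing coloring. -/
noncomputable def packingChromatic {V : Type*} (G : SimpleGraph V) : ℕ :=
  sInf {t | ∃ c : V → ℕ, IsPackingColoring G t c}

/-- The star `K_{1,3}` on `{0, 1, 2, 3}` with center `1` and edges `{1,0}, {1,2}, {1,3}`. -/
def clawK13 : SimpleGraph (Fin 4) :=
  SimpleGraph.fromRel (fun u v => (u, v) ∈
    [((1 : Fin 4), (0 : Fin 4)), (1, 2), (1, 3)])

/-!
The last letter is a graph homomorphism `S^n_G → G`, so the 2-colouring of the claw by
"is the centre `1`" pulls back to `S^n_{K_{1,3}}`, and walks between vertices on the same side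
have even length. The vertices whose last letter is not `1` get colour 1. For `n = 1` the other
side is the single vertex `1`, coloured 2. For `n ≥ 2`, a vertex `x` has at most two neighbours
with a given last letter `a` (one reached through the last position, one through an earlier
position) and exactly one of them has penultimate letter `a`; so colouring the vertices ending
in `1` by 2 or 3 according to whether their penultimate letter is `1` keeps equal colours at
distance at least 4.

For the lower bounds, an edge needs two colours and a path on four vertices needs three; for
`n ≥ 2` such a path, `01 − 10 − 11 − 12` in `S^2_{K_{1,3}}`, is copied into `S^n_{K_{1,3}}`
by prefixing a fixed word.
-/

open SimpleGraph

section PackingColoring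

variable {V : Type*} {G : SimpleGraph V} {t : ℕ} {c : V → ℕ}

theorem packingChromatic_eq_of_isPackingColoring (hc : IsPackingColoring G t c)
    (hmin : ∀ s c', IsPackingColoring G s c' → t ≤ s) : packingChromatic G = t :=
  le_antisymm (Nat.sInf_le ⟨c, hc⟩) (le_csInf ⟨t, c, hc⟩ fun s ⟨c', hc'⟩ => hmin s c' hc')

namespace IsPackingColoring

theorem ne_of_adj (hc : IsPackingColoring G t c) {u v : V} (h : G.Adj u v) : c u ≠ c v :=
  fun huv => (hc.1 u).1.not_gt (hc.2 u v h.ne huv h.toWalk)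

theorem eq_one_of_adj_of_adj (hc : IsPackingColoring G t c) {u w v : V} (huw : G.Adj u w)
    (hwv : G.Adj w v) (huv : u ≠ v) (h : c u = c v) : c u = 1 := by
  have hlt : c u < 2 := hc.2 u v huv h (.cons huw hwv.toWalk)
  have := (hc.1 u).1
  omega

theorem two_le (hc : IsPackingColoring G t c) {u v : V} (h : G.Adj u v) : 2 ≤ t := by
  have := hc.ne_of_adj h
  have := hc.1 u
  have := hc.1 v
  omega

theorem three_le (hc : IsPackingColoring G t c) {a b d e : V} (hab : G.Adj a b)
    (hbd : G.Adj b d) (hde : G.Adj d e) (had : a ≠ d) (hbe : b ≠ e) : 3 ≤ t := by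
  by_contra! ht
  have := hc.ne_of_adj hab
  have := hc.ne_of_adj hbd
  have := hc.ne_of_adj hde
  have := hc.1 a; have := hc.1 b; have := hc.1 d; have := hc.1 e
  have had' : c a = c d := by omega
  have hbe' : c b = c e := by omega
  have := hc.eq_one_of_adj_of_adj hab hbd had had'
  have := hc.eq_one_of_adj_of_adj hbd hde hbe hbe'
  omega

theorem comap {W : Type*} {H : SimpleGraph W} {c : W → ℕ} (hc : IsPackingColoring H t c)
    (f : G →g H) (hf : Function.Injective f) : IsPackingColoring G t (c ∘ f) :=
  ⟨fun v => hc.1 (f v), fun u v huv h p => by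
    simpa only [Walk.length_map, Function.comp_apply] using hc.2 _ _ (hf.ne huv) h (p.map f)⟩

end IsPackingColoring

theorem isPackingColoring_of_coloring_bool (s : G.Coloring Bool) (hc : ∀ v, 1 ≤ c v ∧ c v ≤ t)
    (ht : t ≤ 3) (hone : ∀ v, c v = 1 ↔ s v = false)
    (hsq : ∀ u v, s u → c u = c v → (G.commonNeighbors u v).Nonempty → u = v) :
    IsPackingColoring G t c := by
  refine ⟨hc, fun u v huv hcuv p => ?_⟩
  have hpos : p.length ≠ 0 := fun h => huv (Walk.eq_of_length_eq_zero h)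
  have hsuv : s u = s v := by
    have h : s u = false ↔ s v = false := (hone u).symm.trans (hcuv ▸ hone v)
    cases hu : s u <;> cases hv : s v <;> simp_all
  obtain ⟨k, hk⟩ := (s.even_length_iff_congr p).2 (by rw [hsuv])
  cases hsu : s u
  · have := (hone u).2 hsu
    omega
  · have h2 : p.length ≠ 2 := fun h =>
      huv (hsq u v hsu hcuv ⟨_, (G.walkLengthTwoEquivCommonNeighbors u v ⟨p, h⟩).2⟩)
    have := hc u
    omega

end PackingColoring

section GenSierpinski

variable {k : ℕ} {G : SimpleGraph (Fin k)}

def GenSierpinskiAdjAt (G : SimpleGraph (Fin k)) {n : ℕ} (i : Fin n) (u v : Fin n → Fin k) :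
    Prop :=
  (∀ j, j < i → u j = v j) ∧ G.Adj (u i) (v i) ∧ ∀ j, i < j → u j = v i ∧ v j = u i

theorem genSierpinski_adj_iff {n : ℕ} {u v : Fin n → Fin k} :
    (genSierpinski G n).Adj u v ↔ ∃ i, GenSierpinskiAdjAt G i u v :=
  Iff.rfl

namespace GenSierpinskiAdjAt

variable {m : ℕ} {i i' : Fin (m + 1)} {x u v : Fin (m + 1) → Fin k}

theorem adj_last (h : GenSierpinskiAdjAt G i u v) :
    G.Adj (u (Fin.last m)) (v (Fin.last m)) := by
  obtain ⟨-, hi, hlt⟩ := h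
  rcases (Fin.le_last i).lt_or_eq with hi_lt | rfl
  · rw [(hlt _ hi_lt).1, (hlt _ hi_lt).2]
    exact hi.symm
  · exact hi

theorem not_lt_of_lt_last (hu : GenSierpinskiAdjAt G i x u) (hv : GenSierpinskiAdjAt G i' x v)
    (hi' : i' < Fin.last m) : ¬ i < i' := by
  intro hii'
  -- `x` is constant after position `i`, so `x i' = x (last) = v i'`, contradicting `x i' ~ v i'`
  have hx : x i' = x (Fin.last m) := (hu.2.2 _ hii').1.trans (hu.2.2 _ (hii'.trans hi')).1.symm
  exact G.ne_of_adj hv.2.1 (hx.trans (hv.2.2 _ hi').1)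

theorem eq_of_last_eq (hu : GenSierpinskiAdjAt G i x u) (hv : GenSierpinskiAdjAt G i' x v)
    (hi : i = Fin.last m ↔ i' = Fin.last m) (huv : u (Fin.last m) = v (Fin.last m)) : u = v := by
  by_cases hiL : i = Fin.last m
  · obtain rfl := hiL
    obtain rfl := hi.1 rfl
    funext j
    rcases (Fin.le_last j).lt_or_eq with hj | rfl
    · rw [← hu.1 j hj, ← hv.1 j hj]
    · exact huv
  have hiL' : i < Fin.last m := (Fin.le_last i).lt_of_ne hiL
  have hi'L : i' < Fin.last m := (Fin.le_last i').lt_of_ne (mt hi.2 hiL)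
  obtain rfl : i = i' :=
    le_antisymm (not_lt.1 (not_lt_of_lt_last hv hu hiL')) (not_lt.1 (not_lt_of_lt_last hu hv hi'L))
  funext j
  rcases lt_trichotomy j i with hj | rfl | hj
  · rw [← hu.1 j hj, ← hv.1 j hj]
  · rw [← (hu.2.2 _ hiL').1, ← (hv.2.2 _ hi'L).1]
  · rw [(hu.2.2 _ hj).2, (hv.2.2 _ hj).2]

theorem penultimate_eq_last_iff {i : Fin (m + 2)} {x u : Fin (m + 2) → Fin k}
    (h : GenSierpinskiAdjAt G i x u) :
    u (Fin.last m).castSucc = u (Fin.last (m + 1)) ↔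
      (i = Fin.last (m + 1) ↔ x (Fin.last m).castSucc = u (Fin.last (m + 1))) := by
  set P := (Fin.last m).castSucc
  set L := Fin.last (m + 1)
  have hPL : P < L := Fin.castSucc_lt_last _
  have hxu : x L ≠ u L := G.ne_of_adj h.adj_last
  rcases (Fin.le_last i).lt_or_eq with hiL | rfl
  · have hiP : i ≤ P := Fin.le_castSucc_iff.2 hiL
    obtain ⟨hxL, huL⟩ := h.2.2 L hiL
    rcases hiP.lt_or_eq with hiP | rfl
    · obtain ⟨hxP, huP⟩ := h.2.2 P hiP
      exact iff_of_true (huP.trans huL.symm)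
        (iff_of_false hiL.ne fun hP => hxu (hxL.trans (hxP.symm.trans hP)))
    · exact iff_of_false (fun hP => hxu (hxL.trans hP)) fun hP => hPL.ne (hP.2 huL.symm)
  · rw [← h.1 P hPL]
    exact (iff_true_left rfl).symm

end GenSierpinskiAdjAt

def genSierpinskiLastLetterHom (G : SimpleGraph (Fin k)) (m : ℕ) :
    genSierpinski G (m + 1) →g G where
  toFun u := u (Fin.last m)
  map_rel' := fun ⟨_, h⟩ => GenSierpinskiAdjAt.adj_last h

theorem genSierpinski_eq_of_adj_of_adj {m : ℕ} {x u v : Fin (m + 2) → Fin k}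
    (hu : (genSierpinski G (m + 2)).Adj x u) (hv : (genSierpinski G (m + 2)).Adj x v)
    (hL : u (Fin.last (m + 1)) = v (Fin.last (m + 1)))
    (hP : u (Fin.last m).castSucc = u (Fin.last (m + 1)) ↔
      v (Fin.last m).castSucc = v (Fin.last (m + 1))) : u = v := by
  obtain ⟨i, hu⟩ := genSierpinski_adj_iff.1 hu
  obtain ⟨i', hv⟩ := genSierpinski_adj_iff.1 hv
  refine hu.eq_of_last_eq hv ?_ hL
  have hui := hu.penultimate_eq_last_iff
  have hvi := hv.penultimate_eq_last_iff
  rw [← hL] at hvi hP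
  tauto

theorem genSierpinski_adj_append {m n : ℕ} (w : Fin m → Fin k) {u v : Fin n → Fin k}
    (h : (genSierpinski G n).Adj u v) :
    (genSierpinski G (m + n)).Adj (Fin.append w u) (Fin.append w v) := by
  obtain ⟨i, hlt, hadj, hgt⟩ := h
  refine ⟨Fin.natAdd m i, fun j hj => ?_, by simpa only [Fin.append_right] using hadj, fun j hj => ?_⟩
  · induction j using Fin.addCases with
    | left j => simp only [Fin.append_left]
    | right j =>
      simp only [Fin.append_right]
      exact hlt j ((Fin.natAdd_lt_natAdd_iff m).1 hj)
  · induction j using Fin.addCases with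
    | left j => exact absurd hj (by simp only [Fin.lt_def, Fin.val_natAdd, Fin.val_castAdd, not_lt]; omega)
    | right j =>
      simp only [Fin.append_right]
      exact hgt j ((Fin.natAdd_lt_natAdd_iff m).1 hj)

def genSierpinskiPrefixHom (G : SimpleGraph (Fin k)) {m n : ℕ} (w : Fin m → Fin k) :
    genSierpinski G n →g genSierpinski G (m + n) where
  toFun := Fin.append w
  map_rel' := genSierpinski_adj_append w

theorem genSierpinskiPrefixHom_injective {m n : ℕ} (w : Fin m → Fin k) :
    Function.Injective (genSierpinskiPrefixHom G (n := n) w) := by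
  intro u v h
  replace h : Fin.append w u = Fin.append w v := h
  funext j
  simpa only [Fin.append_right] using congrFun h (Fin.natAdd m j)

end GenSierpinski

theorem clawK13_adj_iff {a b : Fin 4} : clawK13.Adj a b ↔ (a = 1 ↔ b ≠ 1) := by
  simp only [clawK13, SimpleGraph.fromRel_adj, List.mem_cons, List.not_mem_nil]
  revert a b
  decide

def clawK13Bicoloring : clawK13.Coloring Bool :=
  Coloring.mk (fun a => decide (a = 1)) fun h => by
    have := clawK13_adj_iff.1 h
    simp only [ne_eq, decide_eq_decide]
    tauto

def genSierpinskiClawBicoloring (m : ℕ) : (genSierpinski clawK13 (m + 1)).Coloring Bool :=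
  clawK13Bicoloring.comp (genSierpinskiLastLetterHom clawK13 m)

theorem genSierpinskiClawBicoloring_apply {m : ℕ} (u : Fin (m + 1) → Fin 4) :
    genSierpinskiClawBicoloring m u = decide (u (Fin.last m) = 1) :=
  rfl

theorem isPackingColoring_genSierpinski_claw_one :
    IsPackingColoring (genSierpinski clawK13 1) 2 (fun u => if u 0 = 1 then 2 else 1) := by
  refine isPackingColoring_of_coloring_bool (genSierpinskiClawBicoloring 0)
    (fun v => by split_ifs <;> norm_num) (by norm_num) (fun v => ?_) fun u v hu huv _ => ?_
  · simp [genSierpinskiClawBicoloring_apply]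
  · have hu1 : u 0 = 1 := of_decide_eq_true hu
    have hv1 : v 0 = 1 := by
      by_contra hv1
      simp [hu1, hv1] at huv
    funext j
    rw [Subsingleton.elim j 0, hu1, hv1]

theorem isPackingColoring_genSierpinski_claw (m : ℕ) :
    IsPackingColoring (genSierpinski clawK13 (m + 2)) 3 (fun u =>
      if u (Fin.last (m + 1)) = 1 then if u (Fin.last m).castSucc = 1 then 2 else 3 else 1) := by
  refine isPackingColoring_of_coloring_bool (genSierpinskiClawBicoloring (m + 1))
    (fun v => by split_ifs <;> norm_num) le_rfl (fun v => ?_) fun u v hu huv ⟨x, hx⟩ => ?_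
  · simp only [genSierpinskiClawBicoloring_apply, decide_eq_false_iff_not]
    split_ifs <;> simp_all
  · have hu1 : u (Fin.last (m + 1)) = 1 := of_decide_eq_true hu
    have hv1 : v (Fin.last (m + 1)) = 1 := by
      by_contra hv1
      rw [if_pos hu1, if_neg hv1] at huv
      split_ifs at huv <;> omega
    refine genSierpinski_eq_of_adj_of_adj hx.1.symm hx.2.symm (hu1.trans hv1.symm) ?_
    rw [if_pos hu1, if_pos hv1] at huv
    rw [hu1, hv1]
    split_ifs at huv <;> omega

theorem genSierpinski_claw_one_adj : (genSierpinski clawK13 1).Adj ![0] ![1] := by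
  simp only [genSierpinski_adj_iff, GenSierpinskiAdjAt, clawK13_adj_iff]
  decide

theorem genSierpinski_claw_two_adj :
    (genSierpinski clawK13 2).Adj ![0, 1] ![1, 0] ∧ (genSierpinski clawK13 2).Adj ![1, 0] ![1, 1] ∧
      (genSierpinski clawK13 2).Adj ![1, 1] ![1, 2] := by
  simp only [genSierpinski_adj_iff, GenSierpinskiAdjAt, clawK13_adj_iff]
  decide

theorem IsPackingColoring.three_le_of_genSierpinski_claw {m t : ℕ}
    {c : (Fin (m + 2) → Fin 4) → ℕ} (hc : IsPackingColoring (genSierpinski clawK13 (m + 2)) t c) :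
    3 ≤ t := by
  obtain ⟨h₁, h₂, h₃⟩ := genSierpinski_claw_two_adj
  exact (hc.comap (genSierpinskiPrefixHom clawK13 (fun _ : Fin m => 0))
    (genSierpinskiPrefixHom_injective _)).three_le h₁ h₂ h₃ (by decide) (by decide)

/-- `χρ(S^1_{K_{1,3}}) = 2` and `χρ(S^n_{K_{1,3}}) = 3` for all `n ≥ 2`. -/
theorem packingChromatic_genSierpinski_claw :
    packingChromatic (genSierpinski clawK13 1) = 2 ∧
    ∀ n : ℕ, 2 ≤ n → packingChromatic (genSierpinski clawK13 n) = 3 := by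
  refine ⟨packingChromatic_eq_of_isPackingColoring isPackingColoring_genSierpinski_claw_one
    fun _ _ hc => hc.two_le genSierpinski_claw_one_adj, fun n hn => ?_⟩
  obtain ⟨m, rfl⟩ := Nat.exists_eq_add_of_le' hn
  exact packingChromatic_eq_of_isPackingColoring (isPackingColoring_genSierpinski_claw m)
    fun _ _ hc => hc.three_le_of_genSierpinski_claw
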